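/- arXiv:2204.01347 — 8 statements merged into one kernel-verified Lean document; each statement's English description precedes it below -/
import Mathlib

section
/- For all integers n ≥ 2 and any r-tuple of positive integers (s_1,...,s_r) with r ≤ n, the odd multiple harmonic star sum H̄*_n(s_1,...,s_r) is not an integer. -/
open Finset

private lemma padicValRat_sum_gt {p : ℕ} [hp : Fact p.Prime] {ι : Type*} {F : ι → ℚ}
    {S : Finset ι} {c : ℤ} (hS : S.Nonempty)
    (hF : ∀ i ∈ S, c < padicValRat p (F i)) (hpos : ∀ i ∈ S, 0 < F i) :
    c < padicValRat p (∑ i ∈ S, F i) := by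
  induction hS using Finset.Nonempty.cons_induction with
  | singleton i => simpa using hF i (by simp)
  | cons k t hkt ht ih =>
    rw [Finset.sum_cons]
    have hsum : 0 < ∑ i ∈ t, F i :=
      Finset.sum_pos (fun i hi => hpos i (Finset.mem_cons_of_mem hi)) ht
    have hk : 0 < F k := hpos k (Finset.mem_cons_self k t)
    have h1 : c < padicValRat p (F k) := hF k (Finset.mem_cons_self k t)
    have h2 : c < padicValRat p (∑ i ∈ t, F i) :=
      ih (fun i hi => hF i (Finset.mem_cons_of_mem hi))
        (fun i hi => hpos i (Finset.mem_cons_of_mem hi))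
    exact lt_of_lt_of_le (lt_min h1 h2)
      (padicValRat.min_le_padicValRat_add (by positivity))

private lemma padicValRat_prod {p : ℕ} [hp : Fact p.Prime] {ι : Type*} (S : Finset ι)
    (F : ι → ℚ) (h : ∀ i ∈ S, F i ≠ 0) :
    padicValRat p (∏ i ∈ S, F i) = ∑ i ∈ S, padicValRat p (F i) := by
  induction S using Finset.cons_induction with
  | empty => simp
  | cons k t hkt ih =>
    rw [Finset.prod_cons, Finset.sum_cons, padicValRat.mul (h k (Finset.mem_cons_self k t))
      (Finset.prod_ne_zero_iff.mpr fun i hi => h i (Finset.mem_cons_of_mem hi)),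
      ih (fun i hi => h i (Finset.mem_cons_of_mem hi))]

theorem odd_mhs_star_not_integer (n r : ℕ) (hr : 1 ≤ r) (hrn : r ≤ n) (hn : 2 ≤ n)
    (s : Fin r → ℕ) (hs : ∀ j, 1 ≤ s j) :
    ¬ ∃ m : ℤ,
      (∑ k ∈ Finset.univ.filter (fun k : Fin r → Fin n => ∀ i j : Fin r, i ≤ j → k i ≤ k j),
        ∏ j, (1 : ℝ) / (2 * (k j : ℝ) + 1) ^ (s j)) = (m : ℝ) := by
  rintro ⟨m, hm⟩
  haveI : Fact (Nat.Prime 3) := ⟨by norm_num⟩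
  set T := Finset.univ.filter (fun k : Fin r → Fin n => ∀ i j : Fin r, i ≤ j → k i ≤ k j) with hT
  set F : (Fin r → Fin n) → ℚ := fun k => ∏ j, (1 : ℚ) / (2 * ((k j : ℕ) : ℚ) + 1) ^ (s j)
    with hFdef
  -- positivity of terms
  have hFpos : ∀ k, 0 < F k := by
    intro k
    apply Finset.prod_pos
    intro j _
    positivity
  -- real sum is cast of rational sum
  have hcast : (∑ k ∈ T, ∏ j, (1 : ℝ) / (2 * (k j : ℝ) + 1) ^ (s j)) = ((∑ k ∈ T, F k : ℚ) : ℝ) := by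
    rw [Rat.cast_sum]
    refine Finset.sum_congr rfl fun k _ => ?_
    rw [hFdef, Rat.cast_prod]
    refine Finset.prod_congr rfl fun j _ => ?_
    push_cast
    ring
  -- basic facts about 3-adic structure
  have h2n1 : 2 * n - 1 ≠ 0 := by omega
  set a := Nat.log 3 (2 * n - 1) with ha
  have ha1 : 1 ≤ a := (Nat.le_log_iff_pow_le (by norm_num) h2n1).mpr (by simpa using by omega)
  have hub : 2 * n - 1 < 3 ^ (a + 1) := Nat.lt_pow_succ_log_self (by norm_num) _
  have hlb : 3 ^ a ≤ 2 * n - 1 := Nat.pow_log_le_self 3 h2n1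
  have h3a1 : 1 ≤ 3 ^ a := Nat.one_le_pow _ _ (by norm_num)
  have hodd3a : Odd ((3:ℕ) ^ a) := Odd.pow (by decide)
  obtain ⟨c, hc'⟩ := hodd3a
  have hc : 3 ^ a = 2 * c + 1 := by omega
  have hcn : c < n := by omega
  have hc1 : 1 ≤ c := by
    have : 3 ≤ 3 ^ a := by
      calc 3 = 3 ^ 1 := by norm_num
      _ ≤ 3 ^ a := Nat.pow_le_pow_right (by norm_num) ha1
    omega
  set k0 : Fin n := ⟨c, hcn⟩ with hk0
  -- valuation bound for each odd number ≤ 2n-1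
  have hvle : ∀ k : Fin n, padicValNat 3 (2 * (k : ℕ) + 1) ≤ a := by
    intro k
    have hk : (k : ℕ) < n := k.isLt
    have hdvd : (3:ℕ) ^ padicValNat 3 (2 * (k : ℕ) + 1) ∣ 2 * (k : ℕ) + 1 :=
      pow_padicValNat_dvd
    have hle : (3:ℕ) ^ padicValNat 3 (2 * (k : ℕ) + 1) ≤ 2 * n - 1 :=
      le_trans (Nat.le_of_dvd (by omega) hdvd) (by omega)
    exact (Nat.le_log_iff_pow_le (by norm_num) h2n1).mpr hle
  -- equality case: only k0
  have hveq : ∀ k : Fin n, padicValNat 3 (2 * (k : ℕ) + 1) = a → k = k0 := by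
    intro k hk
    have hdvd : (3:ℕ) ^ a ∣ 2 * (k : ℕ) + 1 := hk ▸ pow_padicValNat_dvd
    obtain ⟨e, he⟩ := hdvd
    have hndvd : ¬ (3:ℕ) ^ (a + 1) ∣ 2 * (k : ℕ) + 1 := by
      intro h
      have := (padicValNat_dvd_iff_le (by omega)).mp h
      omega
    have hoe : Odd e := by
      have h1 : Odd (2 * (k : ℕ) + 1) := Nat.odd_iff.mpr (by omega)
      rw [he, Nat.odd_mul] at h1
      exact h1.2
    have he2 : e % 2 = 1 := Nat.odd_iff.mp hoe
    have he3 : e % 3 ≠ 0 := by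
      intro h
      apply hndvd
      obtain ⟨f, hf⟩ := Nat.dvd_of_mod_eq_zero h
      rw [he, hf, pow_succ]
      exact ⟨f, by ring⟩
    have hcase : e = 1 ∨ 5 ≤ e := by omega
    rcases hcase with rfl | h5
    · have hkk : 2 * (k : ℕ) + 1 = 2 * c + 1 := by rw [he, mul_one, hc]
      refine Fin.ext ?_
      rw [hk0]
      simp only [Fin.val_mk]
      omega
    · exfalso
      have h53 : 5 * 3 ^ a ≤ 3 ^ a * e := by
        calc 5 * 3 ^ a = 3 ^ a * 5 := by ring
        _ ≤ 3 ^ a * e := Nat.mul_le_mul_left _ h5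
      have hk : (k : ℕ) < n := k.isLt
      have h31 : (3:ℕ) ^ (a + 1) = 3 * 3 ^ a := by rw [pow_succ]; ring
      omega
  -- valuation of each term
  have hterm : ∀ (d t : ℕ), d ≠ 0 →
      padicValRat 3 ((1:ℚ) / ((d : ℚ)) ^ t) = -((t : ℤ) * padicValNat 3 d) := by
    intro d t hd
    rw [one_div, padicValRat.inv, padicValRat.pow (d : ℚ),
      padicValRat.of_nat]
  have hval : ∀ k : Fin r → Fin n,
      padicValRat 3 (F k) = -∑ j, (s j : ℤ) * padicValNat 3 (2 * ((k j : ℕ)) + 1) := by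
    intro k
    rw [hFdef]
    have hrw : ∀ j : Fin r, (1 : ℚ) / (2 * ((k j : ℕ) : ℚ) + 1) ^ (s j)
        = (1 : ℚ) / (((2 * (k j : ℕ) + 1 : ℕ)) : ℚ) ^ (s j) := by
      intro j; push_cast; ring_nf
    simp only [hrw]
    rw [padicValRat_prod _ _ (fun j _ => by positivity), ← Finset.sum_neg_distrib]
    exact Finset.sum_congr rfl fun j _ => hterm _ _ (by omega)
  -- the distinguished constant chain
  set kc : Fin r → Fin n := fun _ => k0 with hkc
  have hkcT : kc ∈ T := by
    rw [hT]
    simp only [Finset.mem_filter, Finset.mem_univ, true_and]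
    intro i j _
    exact le_refl _
  have hvk0 : padicValNat 3 (2 * (k0 : ℕ) + 1) = a := by
    have : 2 * (k0 : ℕ) + 1 = 3 ^ a := by simp [hk0, hc]
    rw [this, padicValNat.prime_pow]
  set c0 : ℤ := -∑ j, (s j : ℤ) * a with hc0
  have hvkc : padicValRat 3 (F kc) = c0 := by
    rw [hval, hc0]
    congr 1
    exact Finset.sum_congr rfl fun j _ => by rw [hkc, hvk0]
  have hc0neg : c0 < 0 := by
    rw [hc0, neg_lt, neg_zero]
    apply Finset.sum_pos
    · intro j _
      have := hs j
      have : (1 : ℤ) ≤ (s j : ℤ) := by exact_mod_cast hs j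
      nlinarith [show (1:ℤ) ≤ (a:ℤ) from by exact_mod_cast ha1]
    · exact ⟨⟨0, by omega⟩, Finset.mem_univ _⟩
  -- all other chains have strictly larger valuation
  have hother : ∀ k ∈ T.erase kc, c0 < padicValRat 3 (F k) := by
    intro k hk
    obtain ⟨hne, hkT⟩ := Finset.mem_erase.mp hk
    rw [hval]
    rw [hc0, neg_lt_neg_iff]
    have hex : ∃ j : Fin r, k j ≠ k0 := by
      by_contra h
      push_neg at h
      exact hne (funext h)
    obtain ⟨j0, hj0⟩ := hex
    apply Finset.sum_lt_sum
    · intro j _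
      have h1 : (padicValNat 3 (2 * ((k j : ℕ)) + 1) : ℤ) ≤ (a : ℤ) := by
        exact_mod_cast hvle (k j)
      have h2 : (0:ℤ) ≤ (s j : ℤ) := by positivity
      exact mul_le_mul_of_nonneg_left h1 h2
    · refine ⟨j0, Finset.mem_univ _, ?_⟩
      have hlt : padicValNat 3 (2 * ((k j0 : ℕ)) + 1) < a := by
        rcases lt_or_eq_of_le (hvle (k j0)) with h | h
        · exact h
        · exact absurd (hveq _ h) hj0
      have h1 : (padicValNat 3 (2 * ((k j0 : ℕ)) + 1) : ℤ) < (a : ℤ) := by exact_mod_cast hlt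
      have h2 : (1:ℤ) ≤ (s j0 : ℤ) := by exact_mod_cast hs j0
      nlinarith
  -- the "other" part is nonempty: the all-zero chain
  have hzT : (fun _ => (⟨0, by omega⟩ : Fin n)) ∈ T.erase kc := by
    rw [Finset.mem_erase]
    constructor
    · intro h
      have := congrFun h ⟨0, by omega⟩
      rw [hkc] at this
      have := congrArg Fin.val this
      simp [hk0] at this
      omega
    · rw [hT]
      simp only [Finset.mem_filter, Finset.mem_univ, true_and]
      intro i j _
      exact le_refl _
  -- compute valuation of the full sum
  have hsplit : ∑ k ∈ T, F k = F kc + ∑ k ∈ T.erase kc, F k :=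
    (Finset.add_sum_erase T F hkcT).symm
  have hRpos : 0 < ∑ k ∈ T.erase kc, F k :=
    Finset.sum_pos (fun i _ => hFpos i) ⟨_, hzT⟩
  have hSpos : 0 < ∑ k ∈ T, F k := Finset.sum_pos (fun i _ => hFpos i) ⟨kc, hkcT⟩
  have hvR : c0 < padicValRat 3 (∑ k ∈ T.erase kc, F k) :=
    padicValRat_sum_gt ⟨_, hzT⟩ hother (fun i _ => hFpos i)
  have hvS : padicValRat 3 (∑ k ∈ T, F k) = c0 := by
    rw [hsplit, padicValRat.add_eq_of_lt (by positivity) (hFpos kc).ne' hRpos.ne'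
      (by rw [hvkc]; exact hvR), hvkc]
  -- contradiction with integrality
  have hmQ : (∑ k ∈ T, F k) = (m : ℚ) := by
    have := hm
    rw [hcast] at this
    exact_mod_cast this
  have hm0 : m ≠ 0 := by
    intro h
    rw [h] at hmQ
    simp at hmQ
    exact hSpos.ne' hmQ
  have : padicValRat 3 ((m : ℚ)) = (padicValInt 3 m : ℤ) := padicValRat.of_int
  rw [hmQ, this] at hvS
  have : (0:ℤ) ≤ (padicValInt 3 m : ℤ) := by positivity
  omega
end

section
/- Let r ≤ n be positive integers and let s = (s_1,...,s_r), t = (t_1,...,t_r) be r-tuples of positive integers such that Σ s_j ≥ Σ t_j and there exists 0 ≤ l ≤ r-1 with s_1 ≤ t_1, ..., s_l ≤ t_l and s_{l+1} ≥ t_{l+1}, ..., s_r ≥ t_r. Then H̄_n(s_1,...,s_r) ≤ H̄_n(t_1,...,t_r). -/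
open Finset

theorem odd_mhs_monotone_compare (n r : ℕ) (hr : 1 ≤ r) (hrn : r ≤ n)
    (s t : Fin r → ℕ) (hs : ∀ j, 1 ≤ s j) (ht : ∀ j, 1 ≤ t j)
    (hwt : ∑ j, t j ≤ ∑ j, s j)
    (hl : ∃ l : ℕ, l ≤ r - 1 ∧ (∀ j : Fin r, (j : ℕ) < l → s j ≤ t j) ∧
      (∀ j : Fin r, l ≤ (j : ℕ) → t j ≤ s j)) :
    (∑ k ∈ Finset.univ.filter (fun k : Fin r → Fin n => ∀ i j : Fin r, i < j → k i < k j),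
        ∏ j, (1 : ℝ) / (2 * (k j : ℝ) + 1) ^ (s j)) ≤
      ∑ k ∈ Finset.univ.filter (fun k : Fin r → Fin n => ∀ i j : Fin r, i < j → k i < k j),
        ∏ j, (1 : ℝ) / (2 * (k j : ℝ) + 1) ^ (t j) := by
  obtain ⟨l, hlr, h1, h2⟩ := hl
  have hlr' : l < r := lt_of_le_of_lt hlr (Nat.sub_lt hr one_pos)
  set L : Fin r := ⟨l, hlr'⟩ with hL
  apply Finset.sum_le_sum
  intro k hk
  simp only [Finset.mem_filter] at hk
  set x : Fin r → ℝ := fun j => 2 * (k j : ℝ) + 1 with hx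
  have hx1 : ∀ j, (1 : ℝ) ≤ x j := by
    intro j
    have : (0:ℝ) ≤ (k j : ℝ) := Nat.cast_nonneg _
    simp only [hx]; linarith
  have hxpos : ∀ j, (0 : ℝ) < x j := fun j => lt_of_lt_of_le one_pos (hx1 j)
  have hxm : ∀ i j : Fin r, i ≤ j → x i ≤ x j := by
    intro i j hij
    rcases eq_or_lt_of_le hij with h | h
    · rw [h]
    · have := hk.2 i j h
      have : (k i : ℝ) ≤ k j := by exact_mod_cast le_of_lt this
      simp only [hx]; linarith
  have key : ∑ j, (t j : ℝ) * Real.log (x j) ≤ ∑ j, (s j : ℝ) * Real.log (x j) := by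
    have hL0 : 0 ≤ Real.log (x L) := Real.log_nonneg (hx1 L)
    have step : ∀ j : Fin r, (t j : ℝ) * Real.log (x j) - (s j : ℝ) * Real.log (x j)
        ≤ ((t j : ℝ) - s j) * Real.log (x L) := by
      intro j
      rw [← sub_mul]
      by_cases hj : (j : ℕ) < l
      · have h1' : (s j : ℝ) ≤ t j := by exact_mod_cast h1 j hj
        have hle : Real.log (x j) ≤ Real.log (x L) :=
          Real.log_le_log (hxpos j) (hxm j L (le_of_lt hj))
        nlinarith [Real.log_nonneg (hx1 j)]
      · have h2' : (t j : ℝ) ≤ s j := by exact_mod_cast h2 j (le_of_not_gt hj)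
        have hle : Real.log (x L) ≤ Real.log (x j) :=
          Real.log_le_log (hxpos L) (hxm L j (le_of_not_gt hj))
        nlinarith [hL0]
    have hsum : ∑ j, ((t j : ℝ) * Real.log (x j) - (s j : ℝ) * Real.log (x j))
        ≤ ∑ j, ((t j : ℝ) - s j) * Real.log (x L) :=
      Finset.sum_le_sum (fun j _ => step j)
    have hwt' : (∑ j, ((t j : ℝ) - s j)) ≤ 0 := by
      have : ((∑ j, t j : ℕ) : ℝ) ≤ ((∑ j, s j : ℕ) : ℝ) := by exact_mod_cast hwt
      push_cast at this
      rw [Finset.sum_sub_distrib]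
      linarith
    have : ∑ j, ((t j : ℝ) - s j) * Real.log (x L)
        = (∑ j, ((t j : ℝ) - s j)) * Real.log (x L) := (Finset.sum_mul _ _ _).symm
    rw [this] at hsum
    have hnp : (∑ j, ((t j : ℝ) - s j)) * Real.log (x L) ≤ 0 :=
      mul_nonpos_of_nonpos_of_nonneg hwt' hL0
    rw [Finset.sum_sub_distrib] at hsum
    linarith
  have hprod : (∏ j, x j ^ t j) ≤ ∏ j, x j ^ s j := by
    have hps : (0 : ℝ) < ∏ j, x j ^ s j := Finset.prod_pos (fun j _ => pow_pos (hxpos j) _)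
    have hpt : (0 : ℝ) < ∏ j, x j ^ t j := Finset.prod_pos (fun j _ => pow_pos (hxpos j) _)
    rw [← Real.log_le_log_iff hpt hps,
      Real.log_prod (fun j _ => (pow_pos (hxpos j) _).ne'),
      Real.log_prod (fun j _ => (pow_pos (hxpos j) _).ne')]
    simpa [Real.log_pow] using key
  calc (∏ j, (1 : ℝ) / x j ^ s j) = 1 / ∏ j, x j ^ s j := by
        rw [Finset.prod_div_distrib, Finset.prod_const_one]
    _ ≤ 1 / ∏ j, x j ^ t j := by
        apply one_div_le_one_div_of_le
        · exact Finset.prod_pos (fun j _ => pow_pos (hxpos j) _)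
        · exact hprod
    _ = ∏ j, (1 : ℝ) / x j ^ t j := by
        rw [Finset.prod_div_distrib, Finset.prod_const_one]
end

section
/- Let r ≤ n be positive integers with e·((1/2)·log(2n-1) + 1) ≤ r. Then for any positive integers s_1,...,s_r, the odd multiple harmonic sum H̄_n(s_1,...,s_r) is not an integer. -/
set_option maxHeartbeats 1000000

open Finset

private lemma aux_esymm_le {n r : ℕ} (g : Fin n → ℝ) (hg : ∀ k, 0 ≤ g k) :
    (r.factorial : ℝ) *
      ∑ f ∈ Finset.univ.filter (fun f : Fin r → Fin n => ∀ i j : Fin r, i < j → f i < f j),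
        ∏ j, g (f j) ≤ (∑ k, g k) ^ r := by
  classical
  set A := Finset.univ.filter (fun f : Fin r → Fin n => ∀ i j : Fin r, i < j → f i < f j) with hA
  have hmono : ∀ f ∈ A, StrictMono f := by
    intro f hf
    simp only [hA, Finset.mem_filter] at hf
    intro i j hij; exact hf.2 i j hij
  have hinj : Set.InjOn (fun p : (Fin r → Fin n) × Equiv.Perm (Fin r) => p.1 ∘ p.2)
      ((A ×ˢ (Finset.univ : Finset (Equiv.Perm (Fin r)))) : Set _) := by
    rintro ⟨f, σ⟩ hp ⟨f', σ'⟩ hq h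
    simp only [Set.mem_prod, Finset.mem_coe] at hp hq
    have hf := hmono f hp.1
    have hf' := hmono f' hq.1
    have hr1 : Set.range f = Set.range f' := by
      have := congrArg Set.range h
      rwa [σ.surjective.range_comp, σ'.surjective.range_comp] at this
    haveI : WellFoundedLT (Fin r) := inferInstance
    have hff : f = f' := (hf.range_inj hf').1 hr1
    subst hff
    have hσ : σ = σ' := Equiv.ext fun j => hf.injective (congrFun h j)
    simp [hσ]
  calc (r.factorial : ℝ) * ∑ f ∈ A, ∏ j, g (f j)
      = ∑ p ∈ A ×ˢ (Finset.univ : Finset (Equiv.Perm (Fin r))),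
          ∏ j, g ((p.1 ∘ p.2) j) := by
        rw [Finset.sum_product, Finset.mul_sum]
        refine Finset.sum_congr rfl fun f _ => ?_
        have h1 : ∀ σ : Equiv.Perm (Fin r), ∏ j, g ((f ∘ σ) j) = ∏ j, g (f j) := by
          intro σ
          simp only [Function.comp_apply]
          exact Equiv.prod_comp σ (fun j => g (f j))
        rw [Finset.sum_congr rfl fun σ _ => h1 σ, Finset.sum_const, Finset.card_univ,
          Fintype.card_perm, Fintype.card_fin, nsmul_eq_mul]
    _ ≤ ∑ f : Fin r → Fin n, ∏ j, g (f j) := by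
        rw [← Finset.sum_image
          (f := fun f : Fin r → Fin n => ∏ j, g (f j))
          (g := fun p : (Fin r → Fin n) × Equiv.Perm (Fin r) => p.1 ∘ p.2)
          (fun p hp q hq hpq =>
            hinj
              (Set.mem_prod.2 ⟨Finset.mem_coe.2 (Finset.mem_product.1 hp).1,
                Finset.mem_coe.2 (Finset.mem_product.1 hp).2⟩)
              (Set.mem_prod.2 ⟨Finset.mem_coe.2 (Finset.mem_product.1 hq).1,
                Finset.mem_coe.2 (Finset.mem_product.1 hq).2⟩) hpq)]
        exact Finset.sum_le_sum_of_subset_of_nonneg (Finset.subset_univ _)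
          (fun f _ _ => Finset.prod_nonneg fun j _ => hg _)
    _ = (∑ k, g k) ^ r := (Fintype.sum_pow g r).symm

theorem odd_mhs_not_integer_large_depth (n r : ℕ) (hr : 1 ≤ r) (hrn : r ≤ n)
    (hre : Real.exp 1 * (Real.log (2 * (n : ℝ) - 1) / 2 + 1) ≤ (r : ℝ))
    (s : Fin r → ℕ) (hs : ∀ j, 1 ≤ s j) :
    ¬ ∃ m : ℤ,
      (∑ k ∈ Finset.univ.filter (fun k : Fin r → Fin n => ∀ i j : Fin r, i < j → k i < k j),
        ∏ j, (1 : ℝ) / (2 * (k j : ℝ) + 1) ^ (s j)) = (m : ℝ) := by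
  classical
  rintro ⟨m, hm⟩
  have hn : 1 ≤ n := le_trans hr hrn
  set g : Fin n → ℝ := fun k => 1 / (2 * (k : ℝ) + 1) with hgdef
  have hb : ∀ k : Fin n, (1 : ℝ) ≤ 2 * (k : ℝ) + 1 := by
    intro k
    have : (0 : ℝ) ≤ (k : ℝ) := Nat.cast_nonneg _
    linarith
  have hgpos : ∀ k : Fin n, 0 < g k := fun k => by
    simp only [hgdef]; positivity
  set A := Finset.univ.filter (fun k : Fin r → Fin n => ∀ i j : Fin r, i < j → k i < k j) with hAdef
  set S : ℝ := ∑ k ∈ A, ∏ j, (1 : ℝ) / (2 * ((k j : ℕ) : ℝ) + 1) ^ (s j) with hSdef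
  -- S > 0
  have hSpos : 0 < S := by
    refine Finset.sum_pos (fun f _ => Finset.prod_pos fun j _ => by positivity) ?_
    refine ⟨fun i => ⟨(i : ℕ), lt_of_lt_of_le i.2 hrn⟩, ?_⟩
    simp only [hAdef, Finset.mem_filter, Finset.mem_univ, true_and]
    intro i j hij
    exact hij
  -- S ≤ e1
  have hterm : ∀ f ∈ A, (∏ j, (1 : ℝ) / (2 * ((f j : ℕ) : ℝ) + 1) ^ (s j)) ≤ ∏ j, g (f j) := by
    intro f _
    refine Finset.prod_le_prod (fun j _ => by positivity) fun j _ => ?_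
    have h1 : (2 * ((f j : ℕ) : ℝ) + 1) ^ (1 : ℕ) ≤ (2 * ((f j : ℕ) : ℝ) + 1) ^ (s j) :=
      pow_le_pow_right₀ (hb (f j)) (hs j)
    rw [pow_one] at h1
    have h2 : (0 : ℝ) < 2 * ((f j : ℕ) : ℝ) + 1 := lt_of_lt_of_le one_pos (hb (f j))
    exact one_div_le_one_div_of_le h2 h1
  set e1 : ℝ := ∑ f ∈ A, ∏ j, g (f j) with he1
  have hSe1 : S ≤ e1 := Finset.sum_le_sum hterm
  -- e1 ≤ T^r / r!
  set T : ℝ := ∑ k, g k with hT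
  have haux : (r.factorial : ℝ) * e1 ≤ T ^ r := aux_esymm_le g (fun k => (hgpos k).le)
  -- T ≤ log(2n-1)/2 + 1
  have hTle : T ≤ Real.log (2 * (n : ℝ) - 1) / 2 + 1 := by
    have hT' : T = ∑ k ∈ Finset.range n, 1 / (2 * (k : ℝ) + 1) := by
      rw [hT, ← Fin.sum_univ_eq_sum_range (fun k => 1 / (2 * (k : ℝ) + 1)) n]
    obtain ⟨n', rfl⟩ : ∃ n', n = n' + 1 := ⟨n - 1, (Nat.succ_pred_eq_of_pos hn).symm⟩
    rw [hT', Finset.sum_range_succ' (fun k => 1 / (2 * (k : ℝ) + 1)) n']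
    have hstep : ∀ k ∈ Finset.range n',
        1 / (2 * ((k + 1 : ℕ) : ℝ) + 1) ≤
          Real.log (2 * ((k + 1 : ℕ) : ℝ) + 1) / 2 - Real.log (2 * (k : ℝ) + 1) / 2 := by
      intro k _
      have hk : (0 : ℝ) ≤ (k : ℝ) := Nat.cast_nonneg _
      set b : ℝ := 2 * (k : ℝ) + 1 with hbdef
      have hbpos : (0 : ℝ) < b := by positivity
      have ha : (2 * ((k + 1 : ℕ) : ℝ) + 1) = b + 2 := by push_cast; ring
      rw [ha]
      have hapos : (0 : ℝ) < b + 2 := by linarith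
      have hlog : Real.log ((b + 2) / b) ≥ 1 - ((b + 2) / b)⁻¹ := by
        have hx : (0 : ℝ) < (b + 2) / b := by positivity
        have := Real.log_le_sub_one_of_pos (x := ((b + 2) / b)⁻¹) (by positivity)
        rw [Real.log_inv] at this
        linarith
      rw [Real.log_div (by linarith) (by linarith)] at hlog
      have hinv : ((b + 2) / b)⁻¹ = b / (b + 2) := by
        rw [inv_div]
      rw [hinv] at hlog
      have h2 : 1 - b / (b + 2) = 2 / (b + 2) := by field_simp; ring
      rw [h2] at hlog
      have hdivs : 2 / (b + 2) = 2 * (1 / (b + 2)) := by ring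
      rw [hdivs] at hlog
      linarith
    have htel : ∑ k ∈ Finset.range n',
        (Real.log (2 * ((k + 1 : ℕ) : ℝ) + 1) / 2 - Real.log (2 * (k : ℝ) + 1) / 2) =
        Real.log (2 * ((n' : ℕ) : ℝ) + 1) / 2 - Real.log (2 * ((0 : ℕ) : ℝ) + 1) / 2 := by
      exact Finset.sum_range_sub (fun k => Real.log (2 * (k : ℝ) + 1) / 2) n'
    have hsum : ∑ k ∈ Finset.range n', 1 / (2 * ((k + 1 : ℕ) : ℝ) + 1) ≤
        Real.log (2 * ((n' : ℕ) : ℝ) + 1) / 2 := by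
      calc ∑ k ∈ Finset.range n', 1 / (2 * ((k + 1 : ℕ) : ℝ) + 1)
          ≤ ∑ k ∈ Finset.range n',
            (Real.log (2 * ((k + 1 : ℕ) : ℝ) + 1) / 2 - Real.log (2 * (k : ℝ) + 1) / 2) :=
            Finset.sum_le_sum hstep
        _ = _ := htel
        _ ≤ Real.log (2 * ((n' : ℕ) : ℝ) + 1) / 2 := by
            norm_num [Real.log_one]
    have hcast : (2 * (((n' + 1 : ℕ)) : ℝ) - 1) = 2 * ((n' : ℕ) : ℝ) + 1 := by push_cast; ring
    rw [hcast]
    have : 1 / (2 * ((0 : ℕ) : ℝ) + 1) = 1 := by norm_num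
    rw [this]
    linarith
  -- e * T ≤ r
  have he1pos : (0 : ℝ) < Real.exp 1 := Real.exp_pos 1
  have hTnonneg : 0 ≤ T := Finset.sum_nonneg fun k _ => (hgpos k).le
  have hTr : Real.exp 1 * T ≤ (r : ℝ) := by
    calc Real.exp 1 * T ≤ Real.exp 1 * (Real.log (2 * (n : ℝ) - 1) / 2 + 1) := by
          exact mul_le_mul_of_nonneg_left hTle he1pos.le
      _ ≤ (r : ℝ) := hre
  -- r^r < exp r * r!
  have hrr : ((r : ℝ)) ^ r < Real.exp 1 ^ r * (r.factorial : ℝ) := by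
    have hfacpos : (0 : ℝ) < (r.factorial : ℝ) := by positivity
    have hlt : (r : ℝ) ^ r / (r.factorial : ℝ) < Real.exp (r : ℝ) := by
      have hsingle := Finset.single_lt_sum
        (f := fun i => (r : ℝ) ^ i / ((Nat.factorial i : ℕ) : ℝ))
        (i := r) (j := 0) (by omega : (0 : ℕ) ≠ r)
        (Finset.self_mem_range_succ r) (Finset.mem_range.2 (by omega))
        (by norm_num [Nat.factorial]) (fun k _ _ => by positivity)
      calc (r : ℝ) ^ r / (r.factorial : ℝ)
          < ∑ i ∈ Finset.range (r + 1), (r : ℝ) ^ i / ((Nat.factorial i : ℕ) : ℝ) := hsingle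
        _ ≤ Real.exp (r : ℝ) := Real.sum_le_exp_of_nonneg (Nat.cast_nonneg r) (r + 1)
    rw [div_lt_iff₀ hfacpos] at hlt
    calc ((r : ℝ)) ^ r < Real.exp (r : ℝ) * (r.factorial : ℝ) := hlt
      _ = Real.exp 1 ^ r * (r.factorial : ℝ) := by rw [← Real.exp_nat_mul, mul_one]
  -- conclude T^r < r!
  have hfacpos : (0 : ℝ) < (r.factorial : ℝ) := by positivity
  have hTr' : T ^ r < (r.factorial : ℝ) := by
    have h1 : T ≤ (r : ℝ) / Real.exp 1 := by
      rw [le_div_iff₀ he1pos]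
      linarith [hTr]
    calc T ^ r ≤ ((r : ℝ) / Real.exp 1) ^ r := pow_le_pow_left₀ hTnonneg h1 r
      _ = (r : ℝ) ^ r / Real.exp 1 ^ r := div_pow _ _ r
      _ < (r.factorial : ℝ) := by
          rw [div_lt_iff₀ (by positivity)]
          calc ((r:ℝ)) ^ r < Real.exp 1 ^ r * (r.factorial : ℝ) := hrr
            _ = (r.factorial : ℝ) * Real.exp 1 ^ r := mul_comm _ _
  have hSlt1 : S < 1 := by
    have : (r.factorial : ℝ) * e1 < (r.factorial : ℝ) * 1 := by
      rw [mul_one]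
      exact lt_of_le_of_lt haux hTr'
    have he1lt : e1 < 1 := lt_of_mul_lt_mul_left this hfacpos.le
    linarith [hSe1]
  -- contradiction
  rw [hm] at hSpos hSlt1
  have h1 : (0 : ℤ) < m := by exact_mod_cast hSpos
  have h2 : m < 1 := by exact_mod_cast hSlt1
  omega
end

section
/- Given positive integers 2 ≤ r ≤ n and positive integers s_2,...,s_r, there exists an integer N (depending on n and s_2,...,s_r) such that for any positive integer s_1 > N, the odd multiple harmonic sum H̄_n(s_1,s_2,...,s_r) is not an integer. -/
/-!
Split the sum according to whether `k₁ = 0`. The tuples with `k₁ = 0` contribute a constant `A`,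
since their first factor is `1` whatever `s₁` is. Every other tuple contributes a positive amount
of at most `3 ^ (-s₁)`, so for large `s₁` the sum lies strictly between `A` and `⌊A⌋ + 1`.
When `r = n` there are no other tuples: the only increasing tuple is `(0, 1, …, n - 1)`, and its
weight lies in `(0, 1)` because `s₂ ≥ 1`.
-/

open Finset Filter Topology

noncomputable def oddWeight {ι : Type*} [Fintype ι] (e k : ι → ℕ) : ℝ :=
  ∏ j, 1 / (2 * (k j : ℝ) + 1) ^ e j

section OddWeight

variable {ι : Type*} [Fintype ι]

lemma oddWeight_pos (e k : ι → ℕ) : 0 < oddWeight e k :=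
  prod_pos fun _ _ => by positivity

lemma one_div_two_mul_add_one_pow_le_one (x e : ℕ) : 1 / (2 * (x : ℝ) + 1) ^ e ≤ 1 :=
  div_le_one_of_le₀ (one_le_pow₀ (by linarith [x.cast_nonneg (α := ℝ)])) (by positivity)

lemma one_lt_two_mul_add_one {x : ℕ} (hx : x ≠ 0) : 1 < 2 * (x : ℝ) + 1 := by
  have : (1 : ℝ) ≤ x := by exact_mod_cast Nat.one_le_iff_ne_zero.2 hx
  linarith

lemma oddWeight_le (e k : ι → ℕ) (i : ι) : oddWeight e k ≤ 1 / (2 * (k i : ℝ) + 1) ^ e i := by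
  classical
  rw [oddWeight, ← mul_prod_erase _ _ (mem_univ i)]
  exact mul_le_of_le_one_right (by positivity)
    (prod_le_one (fun _ _ => by positivity) fun _ _ => one_div_two_mul_add_one_pow_le_one _ _)

lemma oddWeight_lt_one {e k : ι → ℕ} {i : ι} (hk : k i ≠ 0) (he : e i ≠ 0) :
    oddWeight e k < 1 :=
  (oddWeight_le e k i).trans_lt <|
    (div_lt_one (by positivity)).2 (one_lt_pow₀ (one_lt_two_mul_add_one hk) he)

variable [DecidableEq ι]

lemma oddWeight_update_of_eq_zero (e k : ι → ℕ) {i : ι} (hk : k i = 0) (a : ℕ) :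
    oddWeight (Function.update e i a) k = oddWeight e k := by
  refine prod_congr rfl fun j _ => ?_
  rcases eq_or_ne j i with rfl | hj
  · simp [hk]
  · rw [Function.update_of_ne hj]

lemma tendsto_oddWeight_update (e k : ι → ℕ) {i : ι} (hk : k i ≠ 0) :
    Tendsto (fun a => oddWeight (Function.update e i a) k) atTop (𝓝 0) := by
  have hpow : Tendsto (fun a : ℕ => 1 / (2 * (k i : ℝ) + 1) ^ a) atTop (𝓝 0) := by
    simpa only [one_div_pow] using tendsto_pow_atTop_nhds_zero_of_lt_one (by positivity)
      ((div_lt_one (by positivity)).2 (one_lt_two_mul_add_one hk))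
  refine squeeze_zero (fun _ => (oddWeight_pos _ _).le) (fun a => ?_) hpow
  simpa using oddWeight_le (Function.update e i a) k i

end OddWeight

lemma eventually_add_ne_intCast {α : Type*} {l : Filter α} {ε : α → ℝ} (A : ℝ)
    (hε : Tendsto ε l (𝓝 0)) (hpos : ∀ x, 0 < ε x) : ∀ᶠ x in l, ∀ m : ℤ, A + ε x ≠ m := by
  have hgap : 0 < (⌊A⌋ : ℝ) + 1 - A := by linarith [Int.lt_floor_add_one A]
  filter_upwards [hε.eventually (gt_mem_nhds hgap)] with x hx m hm
  have hlow : ⌊A⌋ < m := Int.floor_lt.2 (by linarith [hpos x])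
  have hup : (m : ℝ) < ⌊A⌋ + 1 := by linarith
  have : m < ⌊A⌋ + 1 := by exact_mod_cast hup
  omega

lemma eventually_sum_oddWeight_update_ne_intCast {ι κ : Type*} [Fintype ι] [DecidableEq ι]
    (K : Finset κ) (f : κ → ι → ℕ) (e : ι → ℕ) {i : ι} (hK : ∃ k ∈ K, f k i ≠ 0) :
    ∀ᶠ a in atTop, ∀ m : ℤ, ∑ k ∈ K, oddWeight (Function.update e i a) (f k) ≠ m := by
  set K₀ := K.filter fun k => f k i = 0
  set K₁ := K.filter fun k => f k i ≠ 0
  have hsplit (a : ℕ) : ∑ k ∈ K, oddWeight (Function.update e i a) (f k) =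
      ∑ k ∈ K₀, oddWeight e (f k) + ∑ k ∈ K₁, oddWeight (Function.update e i a) (f k) := by
    rw [← sum_filter_add_sum_filter_not K fun k => f k i = 0]
    congr 1
    exact sum_congr rfl fun k hk => oddWeight_update_of_eq_zero _ _ (mem_filter.1 hk).2 a
  have htail :
      Tendsto (fun a => ∑ k ∈ K₁, oddWeight (Function.update e i a) (f k)) atTop (𝓝 0) := by
    simpa using tendsto_finsetSum K₁ fun k hk =>
      tendsto_oddWeight_update e (f k) (mem_filter.1 hk).2
  obtain ⟨k, hk, hki⟩ := hK
  have hpos (a : ℕ) : 0 < ∑ k ∈ K₁, oddWeight (Function.update e i a) (f k) :=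
    sum_pos (fun _ _ => oddWeight_pos _ _) ⟨k, mem_filter.2 ⟨hk, hki⟩⟩
  simpa only [hsplit] using eventually_add_ne_intCast _ htail hpos

theorem odd_mhs_not_integer_s1_large (n r : ℕ) (hr : 2 ≤ r) (hrn : r ≤ n)
    (s : Fin r → ℕ) (hs : ∀ j : Fin r, j ≠ ⟨0, by omega⟩ → 1 ≤ s j) :
    ∃ N : ℕ, ∀ s₁ : ℕ, N < s₁ →
      ¬ ∃ m : ℤ,
        (∑ k ∈ Finset.univ.filter (fun k : Fin r → Fin n => ∀ i j : Fin r, i < j → k i < k j),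
          ∏ j, (1 : ℝ) / (2 * (k j : ℝ) + 1) ^ ((Function.update s ⟨0, by omega⟩ s₁) j)) = (m : ℝ) := by
  change ∃ N : ℕ, ∀ s₁ : ℕ, N < s₁ → ¬ ∃ m : ℤ,
    ∑ k ∈ univ.filter (fun k : Fin r → Fin n => StrictMono k),
      oddWeight (Function.update s ⟨0, by omega⟩ s₁) (fun j => k j) = m
  rcases hrn.eq_or_lt with rfl | hlt
  · have hK : univ.filter (fun k : Fin r → Fin r => StrictMono k) = {id} := by
      ext k
      simpa using ⟨StrictMono.eq_id, fun hk => hk ▸ strictMono_id⟩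
    refine ⟨0, fun s₁ _ ⟨m, hm⟩ => ?_⟩
    set j₁ : Fin r := ⟨1, by omega⟩
    have hj₁ : j₁ ≠ ⟨0, by omega⟩ := by simp [j₁, Fin.ext_iff]
    rw [hK, sum_singleton] at hm
    have hlow : (0 : ℝ) < m := hm ▸ oddWeight_pos _ _
    have hup : (m : ℝ) < 1 := hm ▸ oddWeight_lt_one (i := j₁) (by simp [j₁])
      (by rw [Function.update_of_ne hj₁]; exact Nat.one_le_iff_ne_zero.1 (hs j₁ hj₁))
    have : (0 : ℤ) < m := by exact_mod_cast hlow
    have : m < 1 := by exact_mod_cast hup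
    omega
  · have hwitness : ∃ k ∈ univ.filter (fun k : Fin r → Fin n => StrictMono k),
        ((k ⟨0, by omega⟩ : Fin n) : ℕ) ≠ 0 :=
      ⟨fun j => ⟨j + 1, by omega⟩,
        mem_filter.2 ⟨mem_univ _, fun _ _ h => by simpa using h⟩, by simp⟩
    obtain ⟨N, hN⟩ := eventually_atTop.1 <| eventually_sum_oddWeight_update_ne_intCast _
      (fun (k : Fin r → Fin n) j => (k j : ℕ)) s hwitness
    exact ⟨N, fun s₁ hs₁ ⟨m, hm⟩ => hN s₁ hs₁.le m hm⟩
end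

section
/- For positive integers n and s and any real x, Σ_{k=0}^{n-1} x^{2k}/(2k+1)^s = Σ_{k=1}^{n} (-1)^{k-1}·C(n,k)·F(k,x²), where F(k,y) = Σ_{l=0}^{k-1} ((1/2)_l)^s · (1-k)_l · y^l / (((3/2)_l)^s · l!) is the value of the generalized hypergeometric function _{s+1}F_s({1/2}^s, 1-k; {3/2}^s; y). -/
open Finset

noncomputable def rising (a : ℝ) (l : ℕ) : ℝ := ∏ i ∈ Finset.range l, (a + (i : ℝ))

lemma rising_half_pos (l : ℕ) : 0 < rising (1 / 2) l := by
  apply Finset.prod_pos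
  intro i _
  positivity

lemma rising_three_half (l : ℕ) : rising (3 / 2) l = rising (1 / 2) l * (2 * l + 1) := by
  induction l with
  | zero => simp [rising]
  | succ m ih =>
      simp only [rising, Finset.prod_range_succ] at *
      rw [ih]
      push_cast
      ring

lemma rising_one_sub (k l : ℕ) (h : l < k) :
    rising (1 - (k : ℝ)) l = (-1 : ℝ) ^ l * (Nat.factorial l : ℝ) * ((k - 1).choose l : ℝ) := by
  induction l with
  | zero => simp [rising]
  | succ m ih =>
      have hm : m < k := Nat.lt_of_succ_lt h
      simp only [rising, Finset.prod_range_succ] at *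
      rw [ih hm]
      have hkey : ((k - 1).choose (m + 1) : ℝ) * (m + 1) = ((k - 1).choose m : ℝ) * ((k - 1 - m : ℕ) : ℝ) := by
        exact_mod_cast congrArg (Nat.cast (R := ℝ)) (Nat.choose_succ_right_eq (k - 1) m)
      have hsub : ((k - 1 - m : ℕ) : ℝ) = (k : ℝ) - 1 - m := by
        have h2 : (k - 1 - m) + (m + 1) = k := by omega
        have := congrArg (Nat.cast (R := ℝ)) h2
        push_cast at this
        linarith
      rw [hsub] at hkey
      have hfac : (Nat.factorial (m + 1) : ℝ) = (m + 1) * Nat.factorial m := by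
        push_cast [Nat.factorial_succ]; ring
      rw [hfac]
      linear_combination ((-1 : ℝ) ^ m * (Nat.factorial m : ℝ)) * hkey

lemma alt_sum_choose_real (N : ℕ) (hN : N ≠ 0) :
    ∑ i ∈ Finset.range (N + 1), (-1 : ℝ) ^ i * (N.choose i : ℝ) = 0 := by
  have h := Int.alternating_sum_range_choose_of_ne hN
  exact_mod_cast h

lemma keyB (l n : ℕ) (h : l + 1 ≤ n) :
    ∑ k ∈ Finset.Icc (l + 1) n, (-1 : ℝ) ^ (k - 1) * (n.choose k : ℝ) * ((k - 1).choose l : ℝ)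
      = (-1 : ℝ) ^ l := by
  induction n, h using Nat.le_induction with
  | base => simp
  | succ n hn ih =>
      have hsplit : ∀ k ∈ Finset.Icc (l + 1) (n + 1),
          (-1 : ℝ) ^ (k - 1) * ((n + 1).choose k : ℝ) * ((k - 1).choose l : ℝ)
            = (-1 : ℝ) ^ (k - 1) * (n.choose k : ℝ) * ((k - 1).choose l : ℝ)
              + (-1 : ℝ) ^ (k - 1) * (n.choose (k - 1) : ℝ) * ((k - 1).choose l : ℝ) := by
        intro k hk
        rw [Finset.mem_Icc] at hk
        obtain ⟨m, rfl⟩ : ∃ m, k = m + 1 := ⟨k - 1, by omega⟩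
        simp only [Nat.add_sub_cancel]
        rw [Nat.choose_succ_succ' n m]
        push_cast
        ring
      rw [Finset.sum_congr rfl hsplit, Finset.sum_add_distrib]
      have hsum1 : ∑ k ∈ Finset.Icc (l + 1) (n + 1),
          (-1 : ℝ) ^ (k - 1) * (n.choose k : ℝ) * ((k - 1).choose l : ℝ) = (-1 : ℝ) ^ l := by
        rw [Finset.sum_Icc_succ_top (by omega)]
        simp [ih, Nat.choose_succ_self]
      have hsum2 : ∑ k ∈ Finset.Icc (l + 1) (n + 1),
          (-1 : ℝ) ^ (k - 1) * (n.choose (k - 1) : ℝ) * ((k - 1).choose l : ℝ) = 0 := by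
        rw [← Finset.Ico_add_one_right_eq_Icc, Finset.sum_Ico_eq_sum_range]
        have hr : n + 1 + 1 - (l + 1) = (n - l) + 1 := by omega
        rw [hr]
        have hterm : ∀ i ∈ Finset.range ((n - l) + 1),
            (-1 : ℝ) ^ (l + 1 + i - 1) * (n.choose (l + 1 + i - 1) : ℝ) * ((l + 1 + i - 1).choose l : ℝ)
              = ((-1 : ℝ) ^ l * (n.choose l : ℝ)) * ((-1 : ℝ) ^ i * ((n - l).choose i : ℝ)) := by
          intro i hi
          rw [Finset.mem_range] at hi
          have h1 : l + 1 + i - 1 = l + i := by omega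
          rw [h1]
          have h2 : n.choose (l + i) * (l + i).choose l = n.choose l * (n - l).choose i := by
            have := Nat.choose_mul (n := n) (k := l + i) (s := l) (by omega)
            simpa using this
          have h3 : (n.choose (l + i) : ℝ) * ((l + i).choose l : ℝ) = (n.choose l : ℝ) * ((n - l).choose i : ℝ) := by
            exact_mod_cast congrArg (Nat.cast (R := ℝ)) h2
          calc (-1 : ℝ) ^ (l + i) * (n.choose (l + i) : ℝ) * ((l + i).choose l : ℝ)
              = (-1 : ℝ) ^ (l + i) * ((n.choose (l + i) : ℝ) * ((l + i).choose l : ℝ)) := by ring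
            _ = (-1 : ℝ) ^ (l + i) * ((n.choose l : ℝ) * ((n - l).choose i : ℝ)) := by rw [h3]
            _ = ((-1 : ℝ) ^ l * (n.choose l : ℝ)) * ((-1 : ℝ) ^ i * ((n - l).choose i : ℝ)) := by
                rw [pow_add]; ring
        rw [Finset.sum_congr rfl hterm, ← Finset.mul_sum,
          alt_sum_choose_real (n - l) (by omega), mul_zero]
      rw [hsum1, hsum2, add_zero]

lemma term_eq (s k l : ℕ) (h : l < k) (x : ℝ) :
    (rising (1 / 2) l) ^ s * rising (1 - (k : ℝ)) l * (x ^ 2) ^ l /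
        ((rising (3 / 2) l) ^ s * (Nat.factorial l : ℝ))
      = (-1 : ℝ) ^ l * ((k - 1).choose l : ℝ) * x ^ (2 * l) / (2 * (l : ℝ) + 1) ^ s := by
  rw [rising_three_half, rising_one_sub k l h, mul_pow, ← pow_mul]
  have h1 : rising (1 / 2) l ≠ 0 := ne_of_gt (rising_half_pos l)
  have h2 : (2 * (l : ℝ) + 1) ≠ 0 := by positivity
  have h3 : (Nat.factorial l : ℝ) ≠ 0 := by positivity
  field_simp

theorem odd_power_sum_hypergeom (n s : ℕ) (hn : 1 ≤ n) (hs : 1 ≤ s) (x : ℝ) :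
    ∑ k ∈ Finset.range n, x ^ (2 * k) / (2 * (k : ℝ) + 1) ^ s =
      ∑ k ∈ Finset.Icc 1 n, (-1 : ℝ) ^ (k - 1) * (n.choose k : ℝ) *
        ∑ l ∈ Finset.range k,
          (rising (1 / 2) l) ^ s * rising (1 - (k : ℝ)) l * (x ^ 2) ^ l /
            ((rising (3 / 2) l) ^ s * (Nat.factorial l : ℝ)) := by
  symm
  have hinner : ∀ k ∈ Finset.Icc 1 n,
      (-1 : ℝ) ^ (k - 1) * (n.choose k : ℝ) *
          ∑ l ∈ Finset.range k,
            (rising (1 / 2) l) ^ s * rising (1 - (k : ℝ)) l * (x ^ 2) ^ l /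
              ((rising (3 / 2) l) ^ s * (Nat.factorial l : ℝ))
        = ∑ l ∈ Finset.range k,
            (-1 : ℝ) ^ (k - 1) * (n.choose k : ℝ) *
              ((-1 : ℝ) ^ l * ((k - 1).choose l : ℝ) * x ^ (2 * l) / (2 * (l : ℝ) + 1) ^ s) := by
    intro k hk
    rw [Finset.mul_sum]
    refine Finset.sum_congr rfl ?_
    intro l hl
    rw [term_eq s k l (Finset.mem_range.mp hl) x]
  rw [Finset.sum_congr rfl hinner]
  rw [Finset.sum_comm' (t' := Finset.range n) (s' := fun l => Finset.Icc (l + 1) n)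
    (by intro k l; simp only [Finset.mem_Icc, Finset.mem_range]; omega)]
  refine Finset.sum_congr rfl ?_
  intro l hl
  have hln : l < n := Finset.mem_range.mp hl
  have hterm : ∀ k ∈ Finset.Icc (l + 1) n,
      (-1 : ℝ) ^ (k - 1) * (n.choose k : ℝ) *
          ((-1 : ℝ) ^ l * ((k - 1).choose l : ℝ) * x ^ (2 * l) / (2 * (l : ℝ) + 1) ^ s)
        = ((-1 : ℝ) ^ (k - 1) * (n.choose k : ℝ) * ((k - 1).choose l : ℝ)) *
            ((-1 : ℝ) ^ l * x ^ (2 * l) / (2 * (l : ℝ) + 1) ^ s) := by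
    intro k hk
    ring
  rw [Finset.sum_congr rfl hterm, ← Finset.sum_mul, keyB l n hln]
  have hone : (-1 : ℝ) ^ l * (-1 : ℝ) ^ l = 1 := by
    rw [← pow_add, ← two_mul, pow_mul]
    norm_num
  linear_combination (x ^ (2 * l) / (2 * (l : ℝ) + 1) ^ s) * hone
end

section
/- For every positive integer n, Σ_{k=0}^{n-1} 1/(2k+1) = Σ_{k=1}^{n} (-2)^{k-1}·C(n,k)·(k-1)!/(2k-1)!!, where (2k-1)!! = 1·3·5···(2k-1). -/
open Finset

/-- auxiliary summand -/
noncomputable def tAux (n j : ℕ) : ℝ :=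
  (-2 : ℝ) ^ j * (n.choose j : ℝ) * (Nat.factorial j : ℝ) /
    (Nat.doubleFactorial (2 * j + 1) : ℝ)

lemma dfac_ne (m : ℕ) : (Nat.doubleFactorial m : ℝ) ≠ 0 := by
  exact_mod_cast (Nat.doubleFactorial_pos m).ne'

lemma tAux_rec (n m : ℕ) (h : m < n) :
    (2 * (m : ℝ) + 3) * tAux n (m + 1) = -2 * ((n : ℝ) - m) * tAux n m := by
  unfold tAux
  have hdf : Nat.doubleFactorial (2 * (m + 1) + 1)
      = (2 * m + 3) * Nat.doubleFactorial (2 * m + 1) := by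
    have : 2 * (m + 1) + 1 = (2 * m + 1) + 2 := by ring
    rw [this, Nat.doubleFactorial_add_two]
  have hch : (n.choose (m + 1) : ℝ) * (m + 1) = (n.choose m : ℝ) * ((n : ℝ) - m) := by
    have := Nat.choose_succ_right_eq n m
    have hcast : ((n.choose (m+1) * (m+1) : ℕ) : ℝ) = ((n.choose m * (n - m) : ℕ) : ℝ) := by
      exact_mod_cast congrArg (Nat.cast (R := ℝ)) this
    push_cast [Nat.cast_sub h.le] at hcast
    exact hcast
  have hfac : (Nat.factorial (m + 1) : ℝ) = (m + 1) * Nat.factorial m := by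
    push_cast [Nat.factorial_succ]; ring
  rw [hdf, hfac]
  push_cast
  have h1 : (Nat.doubleFactorial (2 * m + 1) : ℝ) ≠ 0 := dfac_ne _
  field_simp
  linear_combination ((-2:ℝ) * (-2:ℝ)^m) * hch

lemma sum_tAux_aux (n : ℕ) : ∀ m, m ≤ n →
    (2 * (n : ℝ) + 1) * ∑ j ∈ Finset.range (m + 1), tAux n j
      = 1 + 2 * ((n : ℝ) - m) * tAux n m := by
  intro m
  induction m with
  | zero =>
    intro _
    simp [tAux, Nat.doubleFactorial]
    ring
  | succ m ih =>
    intro hm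
    have hmn : m < n := hm
    have ih' := ih (Nat.le_of_lt hmn)
    rw [Finset.sum_range_succ, mul_add, ih']
    have hrec := tAux_rec n m hmn
    push_cast
    nlinarith [hrec]

lemma sum_tAux (n : ℕ) :
    ∑ j ∈ Finset.range (n + 1), tAux n j = 1 / (2 * (n : ℝ) + 1) := by
  have h := sum_tAux_aux n n le_rfl
  have hpos : (2 * (n : ℝ) + 1) ≠ 0 := by positivity
  rw [sub_self, mul_zero, zero_mul, add_zero] at h
  field_simp
  linarith [h]

theorem odd_harmonic_double_factorial (n : ℕ) (hn : 1 ≤ n) :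
    ∑ k ∈ Finset.range n, (1 : ℝ) / (2 * (k : ℝ) + 1) =
      ∑ k ∈ Finset.Icc 1 n, (-2 : ℝ) ^ (k - 1) * (n.choose k : ℝ) *
        (Nat.factorial (k - 1) : ℝ) / (Nat.doubleFactorial (2 * k - 1) : ℝ) := by
  -- rewrite RHS as a range sum of tAux-like terms
  induction n, hn using Nat.le_induction with
  | base =>
    norm_num [Nat.doubleFactorial]
  | succ n hn ih =>
    rw [Finset.sum_range_succ, ih]
    -- convert Icc sums to range sums
    have conv : ∀ m : ℕ, ∑ k ∈ Finset.Icc 1 m, (-2 : ℝ) ^ (k - 1) * (m.choose k : ℝ) *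
        (Nat.factorial (k - 1) : ℝ) / (Nat.doubleFactorial (2 * k - 1) : ℝ)
        = ∑ j ∈ Finset.range m, (-2 : ℝ) ^ j * (m.choose (j+1) : ℝ) *
        (Nat.factorial j : ℝ) / (Nat.doubleFactorial (2 * j + 1) : ℝ) := by
      intro m
      rw [← Finset.Ico_add_one_right_eq_Icc, Finset.sum_Ico_eq_sum_range]
      apply Finset.sum_congr (by simp)
      intro j _
      have h1 : 1 + j - 1 = j := by omega
      have h2 : 2 * (1 + j) - 1 = 2 * j + 1 := by omega
      rw [h1, h2, add_comm 1 j]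
    rw [conv, conv]
    have pascal : ∀ j : ℕ, ((n+1).choose (j+1) : ℝ) = (n.choose j : ℝ) + (n.choose (j+1) : ℝ) := by
      intro j
      exact_mod_cast congrArg (Nat.cast (R := ℝ)) (Nat.choose_succ_succ n j)
    have split : ∑ j ∈ Finset.range (n+1), (-2 : ℝ) ^ j * ((n+1).choose (j+1) : ℝ) *
        (Nat.factorial j : ℝ) / (Nat.doubleFactorial (2 * j + 1) : ℝ)
        = (∑ j ∈ Finset.range (n+1), tAux n j)
          + ∑ j ∈ Finset.range (n+1), (-2 : ℝ) ^ j * (n.choose (j+1) : ℝ) *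
            (Nat.factorial j : ℝ) / (Nat.doubleFactorial (2 * j + 1) : ℝ) := by
      rw [← Finset.sum_add_distrib]
      apply Finset.sum_congr rfl
      intro j _
      rw [pascal j]
      unfold tAux
      ring
    have last0 : ∑ j ∈ Finset.range (n+1), (-2 : ℝ) ^ j * (n.choose (j+1) : ℝ) *
        (Nat.factorial j : ℝ) / (Nat.doubleFactorial (2 * j + 1) : ℝ)
        = ∑ j ∈ Finset.range n, (-2 : ℝ) ^ j * (n.choose (j+1) : ℝ) *
        (Nat.factorial j : ℝ) / (Nat.doubleFactorial (2 * j + 1) : ℝ) := by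
      rw [Finset.sum_range_succ, Nat.choose_succ_self]
      simp
    rw [split, sum_tAux, last0]
    ring
end

section
/- For positive integers m and n, define G_{m,n} = Σ_{k=0}^{n-1} 1/((2k+1)(2k+2)···(2k+m)). Then G_{m,n} = Σ_{k=1}^{n} (-1)^{k-1}/((m-1)!·(m+k-1)) · C(n,k) · Σ_{l=0}^{k-1} (1)_l·(1-k)_l·(-1)^l/(l!·(m+k)_l). -/
open Finset

noncomputable def Bint (a b : ℕ) : ℝ := ∫ x in (0:ℝ)..1, x ^ a * (1 - x) ^ b

open intervalIntegral in
lemma Bint_val (b a : ℕ) : Bint a b = (a.factorial * b.factorial : ℝ) / (a + b + 1).factorial := by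
  induction b generalizing a with
  | zero =>
    simp only [Bint, pow_zero, mul_one, integral_pow, Nat.factorial_zero, Nat.cast_one,
      one_pow, zero_pow (Nat.succ_ne_zero a), add_zero]
    rw [show a + 1 = 1 + a from Nat.add_comm a 1] at *
    rw [show (1 + a) = a + 1 from Nat.add_comm 1 a, Nat.factorial_succ]
    have h2 : ((a:ℝ)+1) ≠ 0 := by positivity
    have h3 : ((a.factorial : ℝ)) ≠ 0 := Nat.cast_ne_zero.mpr (Nat.factorial_ne_zero _)
    push_cast
    field_simp
    norm_num
  | succ b ih =>
    have ha : ((a:ℝ)+1) ≠ 0 := by positivity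
    have key : ∫ x in (0:ℝ)..1, (1 - x) ^ (b + 1) * x ^ a
        = ((b:ℝ)+1)/((a:ℝ)+1) * ∫ x in (0:ℝ)..1, x^(a+1) * (1-x)^b := by
      have hu : ∀ x ∈ Set.uIcc (0:ℝ) 1, HasDerivAt (fun x : ℝ => (1 - x) ^ (b+1))
          (-((b:ℝ)+1) * (1 - x)^b) x := by
        intro x _
        have h1 : HasDerivAt (fun x : ℝ => 1 - x) (-1) x := by
          simpa using (hasDerivAt_id x).const_sub 1
        have := h1.fun_pow (b+1)
        refine this.congr_deriv ?_
        push_cast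
        ring
      have hv : ∀ x ∈ Set.uIcc (0:ℝ) 1, HasDerivAt (fun x : ℝ => x ^ (a+1) / ((a:ℝ)+1))
          (x ^ a) x := by
        intro x _
        have h := (hasDerivAt_pow (a+1) x).div_const ((a:ℝ)+1)
        refine h.congr_deriv ?_
        push_cast
        field_simp
      have hu' : IntervalIntegrable (fun x : ℝ => -((b:ℝ)+1) * (1 - x)^b)
          MeasureTheory.volume 0 1 :=
        ((by fun_prop : Continuous fun x : ℝ => -((b:ℝ)+1) * (1 - x)^b).intervalIntegrable 0 1)
      have hv' : IntervalIntegrable (fun x : ℝ => x ^ a) MeasureTheory.volume 0 1 :=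
        ((by fun_prop : Continuous fun x : ℝ => x ^ a).intervalIntegrable 0 1)
      have hib := integral_mul_deriv_eq_deriv_mul hu hv hu' hv'
      have hb : (∫ x in (0:ℝ)..1, -((b:ℝ)+1)*(1-x)^b * (x^(a+1)/((a:ℝ)+1)))
          = - ∫ x in (0:ℝ)..1, ((b:ℝ)+1)/((a:ℝ)+1) * (x^(a+1)*(1-x)^b) := by
        rw [← integral_neg]
        apply integral_congr
        intro x _
        field_simp
      rw [hib, hb, integral_const_mul]
      simp [zero_pow]
    have flip : Bint a (b+1) = ∫ x in (0:ℝ)..1, (1-x)^(b+1) * x^a := by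
      rw [Bint]
      apply integral_congr
      intro x _
      ring
    rw [flip, key, show (∫ x in (0:ℝ)..1, x^(a+1)*(1-x)^b) = Bint (a+1) b from rfl, ih (a+1)]
    have h1 : (a + 1 + b + 1 : ℕ) = (a + (b+1) + 1 : ℕ) := by ring
    rw [h1, Nat.factorial_succ a, Nat.factorial_succ b]
    have h3 : ((a + (b+1) + 1).factorial : ℝ) ≠ 0 := Nat.cast_ne_zero.mpr (Nat.factorial_ne_zero _)
    have h4 : ((a.factorial : ℝ)) ≠ 0 := Nat.cast_ne_zero.mpr (Nat.factorial_ne_zero _)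
    push_cast
    field_simp

lemma sub_pow_real (y : ℝ) (n : ℕ) :
    (1 - y) ^ n = ∑ j ∈ range (n+1), (-1:ℝ)^j * (n.choose j) * y^j := by
  have := add_pow (-y) 1 n
  simp only [one_pow, mul_one] at this
  rw [show (1:ℝ) - y = -y + 1 by ring, this]
  apply Finset.sum_congr rfl
  intro j _
  rw [neg_pow]
  ring

lemma Qlem (n : ℕ) (y : ℝ) :
    ∑ k ∈ range n, (1 - y) ^ k = ∑ j ∈ range n, (-1:ℝ)^j * (n.choose (j+1)) * y^j := by
  induction n with
  | zero => simp
  | succ n ih =>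
    rw [Finset.sum_range_succ, ih]
    have h1 : ∀ j, ((n+1).choose (j+1) : ℝ) = (n.choose j : ℝ) + (n.choose (j+1) : ℝ) := by
      intro j
      rw [Nat.choose_succ_succ' n j]
      push_cast
      ring
    have h2 : ∑ j ∈ range (n+1), (-1:ℝ)^j * ((n+1).choose (j+1)) * y^j
        = (∑ j ∈ range (n+1), (-1:ℝ)^j * (n.choose j) * y^j)
          + ∑ j ∈ range (n+1), (-1:ℝ)^j * (n.choose (j+1)) * y^j := by
      rw [← Finset.sum_add_distrib]
      apply Finset.sum_congr rfl
      intro j _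
      rw [h1 j]
      ring
    rw [h2, ← sub_pow_real]
    have h3 : ∑ j ∈ range (n+1), (-1:ℝ)^j * (n.choose (j+1)) * y^j
        = ∑ j ∈ range n, (-1:ℝ)^j * (n.choose (j+1)) * y^j := by
      rw [Finset.sum_range_succ, Nat.choose_succ_self]
      simp
    rw [h3]
    ring

lemma rising_one (l : ℕ) : rising 1 l = l.factorial := by
  rw [rising]
  rw [← Finset.prod_range_add_one_eq_factorial l]
  push_cast
  apply Finset.prod_congr rfl
  intro i _
  ring

lemma rising_nat (c l : ℕ) : rising ((c:ℝ)+1) l = ((c+l).factorial : ℝ) / (c.factorial : ℝ) := by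
  induction l with
  | zero =>
    simp only [rising, Finset.range_zero, Finset.prod_empty, Nat.add_zero]
    rw [div_self (Nat.cast_ne_zero.mpr (Nat.factorial_ne_zero _))]
  | succ l ih =>
    rw [rising, Finset.prod_range_succ, ← rising, ih]
    have h : ((c + (l+1)).factorial : ℕ) = (c + l + 1) * (c+l).factorial := by
      rw [show c + (l+1) = (c+l)+1 by ring, Nat.factorial_succ]
    rw [h]
    have h4 : ((c.factorial : ℝ)) ≠ 0 := Nat.cast_ne_zero.mpr (Nat.factorial_ne_zero _)
    push_cast
    field_simp
    ring

lemma rising_neg (l : ℕ) : ∀ d : ℕ, rising (-((l + d : ℕ) : ℝ)) l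
    = (-1:ℝ)^l * (((l+d).factorial : ℝ)) / ((d.factorial : ℝ)) := by
  induction l with
  | zero =>
    intro d
    simp only [rising, Finset.range_zero, Finset.prod_empty, Nat.zero_add]
    rw [pow_zero, one_mul, div_self (Nat.cast_ne_zero.mpr (Nat.factorial_ne_zero _))]
  | succ l ih =>
    intro d
    rw [rising, Finset.prod_range_succ, ← rising]
    have h1 : ((l + 1 + d : ℕ) : ℝ) = ((l + (d+1) : ℕ) : ℝ) := by push_cast; ring
    rw [h1, ih (d+1)]
    have h2 : ((l+(d+1)).factorial : ℕ) = ((l+1+d).factorial : ℕ) := by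
      rw [show l + (d+1) = l+1+d by ring]
    rw [h2]
    have h3 : ((d.factorial : ℕ) : ℝ) ≠ 0 := Nat.cast_ne_zero.mpr (Nat.factorial_ne_zero _)
    have h4 : (((d+1).factorial : ℕ) : ℝ) ≠ 0 := Nat.cast_ne_zero.mpr (Nat.factorial_ne_zero _)
    rw [Nat.factorial_succ d]
    push_cast
    field_simp
    ring

lemma prod_Icc_fact (k : ℕ) : ∀ m : ℕ, ∏ i ∈ Finset.Icc 1 m, (2 * (k : ℝ) + (i : ℝ))
    = ((2*k+m).factorial : ℝ) / ((2*k).factorial : ℝ) := by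
  intro m
  induction m with
  | zero =>
    simp only [Finset.Icc_self, Nat.add_zero]
    rw [show Finset.Icc 1 0 = ∅ from rfl, Finset.prod_empty,
      div_self (Nat.cast_ne_zero.mpr (Nat.factorial_ne_zero _))]
  | succ m ih =>
    rw [Finset.prod_Icc_succ_top (Nat.one_le_iff_ne_zero.mpr (Nat.succ_ne_zero m)), ih]
    have h : ((2*k + (m+1)).factorial : ℕ) = (2*k+m+1) * (2*k+m).factorial := by
      rw [show 2*k + (m+1) = (2*k+m)+1 by ring, Nat.factorial_succ]
    rw [h]
    have h4 : (((2*k).factorial : ℕ) : ℝ) ≠ 0 := Nat.cast_ne_zero.mpr (Nat.factorial_ne_zero _)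
    push_cast
    field_simp
    ring


theorem G_eval (m n : ℕ) (hm : 1 ≤ m) (hn : 1 ≤ n) :
    ∑ k ∈ Finset.range n, (1 : ℝ) / ∏ i ∈ Finset.Icc 1 m, (2 * (k : ℝ) + (i : ℝ)) =
      ∑ k ∈ Finset.Icc 1 n, (-1 : ℝ) ^ (k - 1) /
          ((Nat.factorial (m - 1) : ℝ) * ((m : ℝ) + (k : ℝ) - 1)) * (n.choose k : ℝ) *
        ∑ l ∈ Finset.range k,
          rising 1 l * rising (1 - (k : ℝ)) l * (-1 : ℝ) ^ l /
            ((Nat.factorial l : ℝ) * rising ((m : ℝ) + (k : ℝ)) l) := by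
  obtain ⟨M, rfl⟩ : ∃ M, m = M + 1 := ⟨m - 1, by omega⟩
  have hMfac : ((M.factorial : ℕ) : ℝ) ≠ 0 := Nat.cast_ne_zero.mpr (Nat.factorial_ne_zero _)
  -- Step A : rewrite LHS terms via Beta values
  have stepA : ∑ k ∈ Finset.range n, (1 : ℝ) / ∏ i ∈ Finset.Icc 1 (M+1), (2 * (k : ℝ) + (i : ℝ))
      = (∑ k ∈ range n, Bint (2*k) M) / (M.factorial : ℝ) := by
    rw [Finset.sum_div]
    apply Finset.sum_congr rfl
    intro k _
    rw [prod_Icc_fact, Bint_val]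
    have h1 : (((2*k).factorial : ℕ) : ℝ) ≠ 0 := Nat.cast_ne_zero.mpr (Nat.factorial_ne_zero _)
    have h2 : (((2*k + M + 1).factorial : ℕ) : ℝ) ≠ 0 :=
      Nat.cast_ne_zero.mpr (Nat.factorial_ne_zero _)
    have h3 : (2*k + (M+1)) = 2*k + M + 1 := rfl
    rw [h3]
    field_simp
  rw [stepA]
  -- Step B : sum of integrals to integral of sum
  have stepB : ∑ k ∈ range n, Bint (2*k) M
      = ∫ x in (0:ℝ)..1, ∑ k ∈ range n, x^(2*k) * (1-x)^M := by
    rw [intervalIntegral.integral_finset_sum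
      (fun i _ => Continuous.intervalIntegrable (by fun_prop) 0 1)]
    rfl
  rw [stepB]
  -- Step C : pointwise identity for the integrand
  have pt : ∀ x : ℝ, ∑ k ∈ range n, x^(2*k)*(1-x)^M
      = ∑ j ∈ range n, ∑ l ∈ range (j+1),
          ((-1:ℝ)^j * (n.choose (j+1)) * (j.choose l)) * (x^l * (1-x)^(M+j)) := by
    intro x
    have q : ∑ k ∈ range n, (x^2)^k
        = ∑ j ∈ range n, (-1:ℝ)^j * (n.choose (j+1)) * (1-x^2)^j := by
      have h := Qlem n (1 - x^2)
      simpa using h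
    have e1 : ∑ k ∈ range n, x^(2*k)*(1-x)^M = (∑ k ∈ range n, (x^2)^k) * (1-x)^M := by
      rw [Finset.sum_mul]
      exact Finset.sum_congr rfl fun k _ => by rw [pow_mul]
    rw [e1, q, Finset.sum_mul]
    apply Finset.sum_congr rfl
    intro j _
    have hxp : (x + 1)^j = ∑ l ∈ range (j+1), x^l * (j.choose l : ℝ) := by
      have h := add_pow x 1 j
      simpa using h
    have e2 : (1-x^2)^j * (1-x)^M
        = (∑ l ∈ range (j+1), x^l * (j.choose l : ℝ)) * (1-x)^(M+j) := by
      rw [← hxp, pow_add]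
      rw [show (1-x^2)^j = (1-x)^j * (x+1)^j by rw [← mul_pow]; congr 1; ring]
      ring
    rw [mul_assoc, mul_assoc, e2, Finset.sum_mul, Finset.mul_sum, Finset.mul_sum]
    apply Finset.sum_congr rfl
    intro l _
    ring
  rw [intervalIntegral.integral_congr (g := fun x => ∑ j ∈ range n, ∑ l ∈ range (j+1),
      ((-1:ℝ)^j * (n.choose (j+1)) * (j.choose l)) * (x^l * (1-x)^(M+j)))
      (fun x _ => pt x)]
  -- Step D : integral of double sum
  have stepD : (∫ x in (0:ℝ)..1, ∑ j ∈ range n, ∑ l ∈ range (j+1),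
      ((-1:ℝ)^j * (n.choose (j+1)) * (j.choose l)) * (x^l * (1-x)^(M+j)))
      = ∑ j ∈ range n, ∑ l ∈ range (j+1),
          ((-1:ℝ)^j * (n.choose (j+1)) * (j.choose l)) * Bint l (M+j) := by
    rw [intervalIntegral.integral_finset_sum
      (fun j _ => Continuous.intervalIntegrable (by fun_prop) 0 1)]
    apply Finset.sum_congr rfl
    intro j _
    rw [intervalIntegral.integral_finset_sum
      (fun l _ => Continuous.intervalIntegrable (by fun_prop) 0 1)]
    exact Finset.sum_congr rfl fun l _ => intervalIntegral.integral_const_mul _ _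
  rw [stepD]
  -- Step E : rewrite the RHS as a range-sum and match term by term
  rw [← Finset.Ico_add_one_right_eq_Icc, Finset.sum_Ico_eq_sum_range]
  simp only [Nat.add_sub_cancel]
  rw [Finset.sum_div]
  apply Finset.sum_congr rfl
  intro j _
  have hj1 : (1 + j) - 1 = j := by omega
  rw [hj1, Nat.add_comm 1 j]
  -- distribute
  rw [Finset.sum_div, Finset.mul_sum]
  apply Finset.sum_congr rfl
  intro l hl
  have hlj : l ≤ j := by
    simp only [Finset.mem_range] at hl
    omega
  obtain ⟨d, rfl⟩ : ∃ d, j = l + d := ⟨j - l, by omega⟩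
  -- rewrite the rising factors
  have hr1 : rising 1 l = (l.factorial : ℝ) := rising_one l
  have hr2 : rising (1 - (((l+d) + 1 : ℕ) : ℝ)) l
      = (-1:ℝ)^l * (((l+d).factorial : ℝ)) / ((d.factorial : ℝ)) := by
    rw [show (1 : ℝ) - (((l+d) + 1 : ℕ) : ℝ) = -(((l + d : ℕ)) : ℝ) by push_cast; ring]
    exact rising_neg l d
  have hr3 : rising (((M+1 : ℕ) : ℝ) + (((l+d) + 1 : ℕ) : ℝ)) l
      = (((M+(l+d)+1+l).factorial : ℝ)) / (((M+(l+d)+1).factorial : ℝ)) := by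
    rw [show (((M+1 : ℕ) : ℝ) + (((l+d) + 1 : ℕ) : ℝ)) = ((M+(l+d)+1 : ℕ) : ℝ) + 1 by
      push_cast; ring]
    rw [rising_nat (M+(l+d)+1) l]
  rw [hr1, hr2, hr3, Bint_val]
  -- now pure arithmetic with factorials
  have c1 : ((l.factorial : ℕ) : ℝ) ≠ 0 := Nat.cast_ne_zero.mpr (Nat.factorial_ne_zero _)
  have c2 : ((d.factorial : ℕ) : ℝ) ≠ 0 := Nat.cast_ne_zero.mpr (Nat.factorial_ne_zero _)
  have c3 : (((M+(l+d)).factorial : ℕ) : ℝ) ≠ 0 := Nat.cast_ne_zero.mpr (Nat.factorial_ne_zero _)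
  have c4 : (((M+(l+d)+1+l).factorial : ℕ) : ℝ) ≠ 0 :=
    Nat.cast_ne_zero.mpr (Nat.factorial_ne_zero _)
  have c5 : (((l+d).factorial : ℕ) : ℝ) ≠ 0 := Nat.cast_ne_zero.mpr (Nat.factorial_ne_zero _)
  have c6 : ((M:ℝ) + (l+d) + 1) ≠ 0 := by positivity
  have hch : (((l+d).choose l : ℕ) : ℝ) * (l.factorial : ℝ) * (d.factorial : ℝ)
      = (((l+d).factorial : ℕ) : ℝ) := by
    have := Nat.choose_mul_factorial_mul_factorial (Nat.le_add_right l d)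
    rw [Nat.add_sub_cancel_left] at this
    exact_mod_cast this
  have hfs : (((M+(l+d)+1).factorial : ℕ) : ℝ)
      = ((M:ℝ)+(l+d)+1) * (((M+(l+d)).factorial : ℕ) : ℝ) := by
    rw [Nat.factorial_succ]
    push_cast
    ring
  have hidx : l + (M + (l+d)) + 1 = M+(l+d)+1+l := by ring
  rw [hidx, hfs]
  have hcast : (((M+1 : ℕ) : ℝ) + (((l+d) + 1 : ℕ) : ℝ) - 1) = ((M:ℝ)+(l+d)+1) := by
    push_cast; ring
  rw [hcast]
  have hneg : (-1:ℝ)^l * (-1:ℝ)^l = 1 := by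
    rw [← mul_pow]
    norm_num
  have hp : ((-1:ℝ))^(l*3) = (-1)^l := by
    rw [pow_mul, pow_succ, ← pow_mul, mul_comm l 2, pow_mul]
    norm_num
  field_simp
  rw [← hch]
  push_cast
  ring_nf
  rw [mul_comm l 2, pow_mul]
  norm_num
end

section
/- For positive integers m and n, Σ_{l=0}^{n-1} (1)_l·(1-n)_l·(-1)^l/(l!·(m+n)_l) = (m-1)!·(m+n-1)·Σ_{k=1}^{n} (-1)^{k-1}·C(n,k)·G_{m,k}, where G_{m,k} = Σ_{j=0}^{k-1} 1/((2j+1)(2j+2)···(2j+m)). -/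
open Finset

open intervalIntegral MeasureTheory

lemma rising_fact (c l : ℕ) : rising ((c:ℝ)+1) l = (c+l).factorial / c.factorial := by
  induction l with
  | zero => simp [rising, div_self (by positivity : (c.factorial:ℝ) ≠ 0)]
  | succ l ih =>
    rw [rising, prod_range_succ, ← rising, ih]
    have h : c + (l+1) = (c+l) + 1 := by omega
    rw [h, Nat.factorial_succ]
    have : (c.factorial : ℝ) ≠ 0 := by positivity
    field_simp
    push_cast
    ring

lemma rising_one_eq (l : ℕ) : rising 1 l = (l.factorial : ℝ) := by
  have := rising_fact 0 l
  simpa using this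

lemma rising_neg_s15 (N l : ℕ) :
    rising (1-(N:ℝ)) l * (-1:ℝ)^l = ∏ i ∈ range l, ((N:ℝ)-1-i) := by
  have h : (-1:ℝ)^l = ∏ _i ∈ range l, (-1:ℝ) := by simp
  rw [rising, h, ← prod_mul_distrib]
  exact prod_congr rfl fun i _ => by ring

lemma prod_sub_cast (n : ℕ) : ∀ l : ℕ, l ≤ n →
    ∏ i ∈ range l, ((n:ℝ) - i) = (n.descFactorial l : ℝ)
  | 0, _ => by simp
  | (l+1), h => by
    rw [prod_range_succ, prod_sub_cast n l (by omega), Nat.descFactorial_succ]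
    push_cast [Nat.cast_sub (show l ≤ n by omega)]
    ring

lemma betaNat (a b : ℕ) : ∫ x in (0:ℝ)..1, x^a * (1-x)^b
    = (a.factorial : ℝ) * b.factorial / (a+b+1).factorial := by
  induction b generalizing a with
  | zero =>
    simp only [pow_zero, mul_one, integral_pow, Nat.add_zero, one_pow]
    rw [Nat.factorial_succ]
    have h1 : (a.factorial : ℝ) ≠ 0 := by positivity
    have h2 : (0:ℝ)^(a+1) = 0 := by simp
    rw [h2]
    push_cast
    field_simp
    simp
  | succ b ih =>
    have key : ∀ x:ℝ, x^a*(1-x)^(b+1) = x^a*(1-x)^b - x^(a+1)*(1-x)^b := by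
      intro x; ring
    have i1 : IntervalIntegrable (fun x:ℝ => x^a*(1-x)^b) volume 0 1 :=
      (Continuous.intervalIntegrable (by continuity) 0 1)
    have i2 : IntervalIntegrable (fun x:ℝ => x^(a+1)*(1-x)^b) volume 0 1 :=
      (Continuous.intervalIntegrable (by continuity) 0 1)
    rw [integral_congr (fun x _ => key x), integral_sub i1 i2, ih a, ih (a+1)]
    have h1 : a + (b+1) + 1 = (a+b+1)+1 := by omega
    have h2 : (a+1) + b + 1 = (a+b+1)+1 := by omega
    rw [h1, h2, Nat.factorial_succ (a+b+1), Nat.factorial_succ b, Nat.factorial_succ a]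
    have n1 : ((a+b+1).factorial : ℝ) ≠ 0 := by positivity
    have n2 : ((a+b+1 : ℕ) : ℝ) + 1 ≠ 0 := by positivity
    field_simp
    push_cast
    ring

lemma altsum (n j : ℕ) :
    ∑ k ∈ range (j+1), (-1:ℝ)^k * ((n+1).choose k) = (-1)^j * (n.choose j) := by
  induction j with
  | zero => simp
  | succ j ih =>
    rw [sum_range_succ, ih, Nat.choose_succ_succ]
    push_cast; ring

lemma alttail (n j : ℕ) (hj : j ≤ n) :
    ∑ k ∈ Icc (j+1) (n+1), (-1:ℝ)^(k-1) * ((n+1).choose k) = (-1)^j * (n.choose j) := by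
  have h1 : ∀ k ∈ Icc (j+1) (n+1), (-1:ℝ)^(k-1) * ((n+1).choose k)
      = -((-1:ℝ)^k * ((n+1).choose k)) := by
    intro k hk
    simp only [mem_Icc] at hk
    obtain ⟨k, rfl⟩ : ∃ k', k = k'+1 := ⟨k-1, by omega⟩
    simp [pow_succ]
  rw [sum_congr rfl h1, sum_neg_distrib, ← Finset.Ico_add_one_right_eq_Icc,
    Finset.sum_Ico_eq_sub _ (by omega : j+1 ≤ n+1+1)]
  have h2 := altsum n (n+1)
  rw [Nat.choose_eq_zero_of_lt (by omega)] at h2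
  simp only [Nat.cast_zero, mul_zero] at h2
  rw [h2, altsum n j]
  ring

lemma swap_sum (N : ℕ) (f g : ℕ → ℝ) :
    ∑ k ∈ Icc 1 N, f k * ∑ j ∈ range k, g j
      = ∑ j ∈ range N, (∑ k ∈ Icc (j+1) N, f k) * g j := by
  simp_rw [Finset.mul_sum, Finset.sum_mul]
  exact Finset.sum_comm' (by intro k j; simp only [mem_Icc, mem_range]; omega)

theorem hypergeom_G_inversion (m n : ℕ) (hm : 1 ≤ m) (hn : 1 ≤ n) :
    ∑ l ∈ Finset.range n,
        rising 1 l * rising (1 - (n : ℝ)) l * (-1 : ℝ) ^ l /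
          ((Nat.factorial l : ℝ) * rising ((m : ℝ) + (n : ℝ)) l) =
      (Nat.factorial (m - 1) : ℝ) * ((m : ℝ) + (n : ℝ) - 1) *
        ∑ k ∈ Finset.Icc 1 n, (-1 : ℝ) ^ (k - 1) * (n.choose k : ℝ) *
          ∑ j ∈ Finset.range k, (1 : ℝ) / ∏ i ∈ Finset.Icc 1 m, (2 * (j : ℝ) + (i : ℝ)) := by
  obtain ⟨m, rfl⟩ : ∃ m', m = m' + 1 := ⟨m-1, by omega⟩
  obtain ⟨n, rfl⟩ : ∃ n', n = n' + 1 := ⟨n-1, by omega⟩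
  trans (((m:ℝ)+n+1) * ∫ x in (0:ℝ)..1, (x+1)^n * (1-x)^(m+n))
  · -- LHS = M * ∫ (x+1)^n (1-x)^(m+n)
    have hterm : ∀ l ∈ range (n+1),
        rising 1 l * rising (1 - ((n+1:ℕ):ℝ)) l * (-1:ℝ)^l /
          ((Nat.factorial l : ℝ) * rising (((m+1:ℕ):ℝ) + ((n+1:ℕ):ℝ)) l)
        = ((m:ℝ)+n+1) * ((n.choose l : ℕ):ℝ) *
            ∫ x in (0:ℝ)..1, x^l*(1-x)^(m+n) := by
      intro l hl
      simp only [mem_range] at hl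
      have e2 : rising (1 - ((n+1:ℕ):ℝ)) l * (-1:ℝ)^l = (n.descFactorial l : ℝ) := by
        have h := rising_neg_s15 (n+1) l
        rw [h, ← prod_sub_cast n l (by omega)]
        exact prod_congr rfl fun i _ => by push_cast; ring
      have e3 : rising (((m+1:ℕ):ℝ) + ((n+1:ℕ):ℝ)) l
          = ((m+n+1+l).factorial : ℝ) / ((m+n+1).factorial : ℝ) := by
        have h : ((m+1:ℕ):ℝ) + ((n+1:ℕ):ℝ) = (((m+n+1:ℕ)):ℝ) + 1 := by push_cast; ring
        rw [h, rising_fact]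
      rw [betaNat, mul_assoc, e2, rising_one_eq, e3,
        Nat.descFactorial_eq_factorial_mul_choose]
      have hidx : l + (m+n) + 1 = m+n+1+l := by omega
      rw [hidx, Nat.factorial_succ (m+n)]
      have n1 : (l.factorial : ℝ) ≠ 0 := by positivity
      have n2 : ((m+n+1+l).factorial : ℝ) ≠ 0 := by positivity
      have n3 : ((m+n).factorial : ℝ) ≠ 0 := by positivity
      field_simp
      push_cast
      ring
    rw [Finset.sum_congr rfl hterm]
    simp_rw [mul_assoc, ← Finset.mul_sum]
    congr 1
    simp_rw [← intervalIntegral.integral_const_mul]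
    rw [← intervalIntegral.integral_finset_sum
      (fun l _ => (Continuous.intervalIntegrable (by continuity) 0 1))]
    refine intervalIntegral.integral_congr fun x _ => ?_
    rw [add_pow, sum_mul]
    exact (Finset.sum_congr rfl fun l hl => by push_cast; ring).symm
  · -- M * ∫ ... = RHS
    symm
    simp only [Nat.add_sub_cancel]
    have hc2 : ((m+1:ℕ):ℝ) + ((n+1:ℕ):ℝ) - 1 = (m:ℝ)+n+1 := by push_cast; ring
    rw [hc2]
    have hprod : ∀ j : ℕ, ∏ i ∈ Icc 1 (m+1), (2*(j:ℝ)+(i:ℕ))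
        = ((2*j+(m+1)).factorial : ℝ) / ((2*j).factorial : ℝ) := by
      intro j
      rw [← rising_fact (2*j) (m+1), rising, ← Finset.Ico_add_one_right_eq_Icc,
        Finset.prod_Ico_eq_prod_range]
      exact prod_congr rfl fun i _ => by push_cast; ring
    have hg : ∀ k ∈ Icc 1 (n+1),
        (-1:ℝ)^(k-1) * ((n+1).choose k : ℝ) *
          ∑ j ∈ range k, (1:ℝ)/∏ i ∈ Icc 1 (m+1), (2*(j:ℝ)+(i:ℕ))
        = ((-1:ℝ)^(k-1) * ((n+1).choose k : ℝ)) *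
          ∑ j ∈ range k, ((2*j).factorial : ℝ)/((2*j+(m+1)).factorial : ℝ) := by
      intro k _
      congr 1
      refine sum_congr rfl fun j _ => ?_
      rw [hprod j, one_div_div]
    rw [Finset.sum_congr rfl hg,
      swap_sum (n+1) (fun k => (-1:ℝ)^(k-1) * ((n+1).choose k : ℝ))
        (fun j => ((2*j).factorial : ℝ)/((2*j+(m+1)).factorial : ℝ))]
    have halt : ∀ j ∈ range (n+1),
        (∑ k ∈ Icc (j+1) (n+1), (-1:ℝ)^(k-1) * ((n+1).choose k : ℝ)) *
          (((2*j).factorial : ℝ)/((2*j+(m+1)).factorial : ℝ))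
        = ((-1:ℝ)^j * (n.choose j : ℝ)) *
          (((2*j).factorial : ℝ)/((2*j+(m+1)).factorial : ℝ)) := by
      intro j hj
      simp only [mem_range] at hj
      rw [alttail n j (by omega)]
    rw [Finset.sum_congr rfl halt, mul_assoc, Finset.mul_sum, Finset.mul_sum]
    have hterm2 : ∀ j ∈ range (n+1),
        (m.factorial : ℝ) * (((m:ℝ)+n+1) *
          (((-1:ℝ)^j * (n.choose j : ℝ)) *
            (((2*j).factorial : ℝ)/((2*j+(m+1)).factorial : ℝ))))
        = ((m:ℝ)+n+1) * (((-1:ℝ)^j * (n.choose j : ℝ)) *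
            ∫ x in (0:ℝ)..1, x^(2*j)*(1-x)^m) := by
      intro j _
      rw [betaNat]
      have hidx : 2*j + m + 1 = 2*j+(m+1) := by omega
      rw [hidx]
      have n2 : ((2*j+(m+1)).factorial : ℝ) ≠ 0 := by positivity
      field_simp
    rw [Finset.sum_congr rfl hterm2, ← Finset.mul_sum]
    congr 1
    simp_rw [← intervalIntegral.integral_const_mul]
    rw [← intervalIntegral.integral_finset_sum
      (fun j _ => (Continuous.intervalIntegrable (by continuity) 0 1))]
    refine intervalIntegral.integral_congr fun x _ => ?_
    have hpt : (x+1)^n * (1-x)^(m+n) = (-(x^2)+1)^n * (1-x)^m := by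
      rw [pow_add, show (-(x^2)+1 : ℝ) = (1-x)*(x+1) by ring, mul_pow]
      ring
    rw [hpt, add_pow, sum_mul]
    refine (Finset.sum_congr rfl fun j hj => ?_).symm
    rw [neg_pow, pow_mul]
    push_cast
    ring
end
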